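/- arXiv:0806.4496 — 2 statements merged into one kernel-verified Lean document; each statement's English description precedes it below -/
import Mathlib

section
/- Let L be a Lie algebra with a decreasing filtration L = L_{≥ -r} ⊇ ⋯ ⊇ L_{≥ s} ⊋ (0) by subspaces satisfying [L_{≥ i}, L_{≥ j}] ⊆ L_{≥ i+j}, with r, s ≥ 0. Let H ⊆ L be an ideal of L such that the centraliser C_L(H) = (0), and suppose that for every X ∈ H there exists a nonzero Y ∈ L_{≥ 1} with [X, Y] = 0. Then H is not generated by 1.5 elements. -/
/-- Criterion (Corollary 1.1.2, algebraic version with Ω = H).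
Let `L` be a Lie algebra with a decreasing filtration `L = L_{≥ -r} ⊇ ⋯ ⊇ L_{≥ s} ⊋ 0`
compatible with the bracket.  Let `H` be a nonzero ideal of `L` with trivial
centraliser in `L`, such that every `X ∈ H` commutes with some nonzero element of
`L_{≥ 1}`.  Then `H` is not generated by 1.5 elements. -/
theorem stmt_2 {F L : Type*} [Field F] [LieRing L] [LieAlgebra F L]
    (r s : ℕ)
    (Lfil : ℤ → Submodule F L)
    (hanti : Antitone Lfil)
    (htop : Lfil (-(r : ℤ)) = ⊤)
    (hs : Lfil (s : ℤ) ≠ ⊥)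
    (hbot : ∀ i : ℤ, (s : ℤ) < i → Lfil i = ⊥)
    (hbracket : ∀ (i j : ℤ) (x y : L), x ∈ Lfil i → y ∈ Lfil j → ⁅x, y⁆ ∈ Lfil (i + j))
    (H : LieSubalgebra F L)
    (hIdeal : ∀ (z : L) (h : L), h ∈ H → ⁅z, h⁆ ∈ H)
    (hHne : H ≠ ⊥)
    (hcent : ∀ z : L, (∀ h ∈ H, ⁅z, h⁆ = 0) → z = 0)
    (hcomm : ∀ X ∈ H, ∃ Y : L, Y ∈ Lfil 1 ∧ Y ≠ 0 ∧ ⁅X, Y⁆ = 0) :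
    ¬ (∀ x : H, x ≠ 0 → ∃ y : H, LieSubalgebra.lieSpan F H {x, y} = ⊤) := by
  intro hyp
  -- The predicate: H meets Lfil i nontrivially.
  set P : ℤ → Prop := fun i => ∃ h : L, h ∈ H ∧ h ≠ 0 ∧ h ∈ Lfil i with hP
  -- P is nonempty: take a nonzero element of H, it lies in Lfil (-r) = ⊤.
  have hHex : ∃ h : L, h ∈ H ∧ h ≠ 0 := by
    by_contra hcon
    push_neg at hcon
    apply hHne
    ext z
    simp only [LieSubalgebra.mem_bot]
    constructor
    · intro hz; exact hcon z hz
    · rintro rfl; exact H.zero_mem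
  obtain ⟨h0, h0H, h0ne⟩ := hHex
  have hPne : ∃ i : ℤ, P i := ⟨-(r : ℤ), h0, h0H, h0ne, by rw [htop]; trivial⟩
  have hPbdd : ∃ b : ℤ, ∀ i : ℤ, P i → i ≤ b := by
    refine ⟨(s : ℤ), fun i hi => ?_⟩
    by_contra hlt
    push_neg at hlt
    obtain ⟨h, _, hne, hmem⟩ := hi
    rw [hbot i hlt] at hmem
    exact hne (by simpa using hmem)
  obtain ⟨s', hs'P, hs'max⟩ := Int.exists_greatest_of_bdd hPbdd hPne
  obtain ⟨x, hxH, hxne, hxfil⟩ := hs'P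
  -- Key: any element of Lfil 1 kills any element of H ∩ Lfil s'.
  have key : ∀ Y ∈ Lfil 1, ∀ h ∈ H, h ∈ Lfil s' → ⁅Y, h⁆ = 0 := by
    intro Y hY h hH hfil
    by_contra hne
    have : P (1 + s') := ⟨⁅Y, h⁆, hIdeal Y h hH, hne, hbracket 1 s' Y h hY hfil⟩
    have := hs'max _ this
    omega
  -- Apply the 1.5-generation hypothesis to x.
  have hxne' : (⟨x, hxH⟩ : H) ≠ 0 := by
    intro hc
    apply hxne
    exact congrArg Subtype.val hc
  obtain ⟨y, hspan⟩ := hyp ⟨x, hxH⟩ hxne'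
  -- Get Y ∈ Lfil 1 commuting with y.
  obtain ⟨Y, hY1, hYne, hyY⟩ := hcomm (y : L) y.2
  -- The centraliser of Y in H is a Lie subalgebra.
  let C : LieSubalgebra F H :=
    { carrier := {h : H | ⁅Y, (h : L)⁆ = 0}
      add_mem' := fun {a b} ha hb => by
        simp only [Set.mem_setOf_eq] at *
        rw [Submodule.coe_add, lie_add, ha, hb, add_zero]
      zero_mem' := by simp
      smul_mem' := fun c a ha => by
        simp only [Set.mem_setOf_eq] at *
        have hcoe : ((c • a : H) : L) = c • (a : L) := rfl
        rw [hcoe, lie_smul, ha, smul_zero]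
      lie_mem' := fun {a b} ha hb => by
        simp only [Set.mem_setOf_eq] at *
        rw [LieSubalgebra.coe_bracket, leibniz_lie, ha, hb]
        simp }
  have hxC : (⟨x, hxH⟩ : H) ∈ C := key Y hY1 x hxH hxfil
  have hyC : y ∈ C := by
    show ⁅Y, (y : L)⁆ = 0
    rw [← lie_skew, hyY, neg_zero]
  have hle : LieSubalgebra.lieSpan F H {(⟨x, hxH⟩ : H), y} ≤ C := by
    apply LieSubalgebra.lieSpan_le.2
    intro z hz
    rcases hz with rfl | rfl
    · exact hxC
    · exact hyC
  rw [hspan] at hle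
  have hall : ∀ h ∈ H, ⁅Y, h⁆ = 0 := by
    intro h hh
    exact hle (show (⟨h, hh⟩ : H) ∈ ⊤ from trivial)
  exact hYne (hcent Y hall)
end

section
/- Let F be a field of characteristic p > 0, let B_m = F[x_1,…,x_m]/(x_1^p,…,x_m^p), and let D be a derivation of B_m. If D is nilpotent as a linear endomorphism of B_m and the kernel of D (the ring of D-constants) equals F·1, then D^{p^m - 1} ≠ 0, i.e. D is regular nilpotent. -/
/-! A linear endomorphism whose kernel has dimension at most one loses at most one dimension
with each application, so `dim ker (D ^ k) ≤ k`. If `D ^ (p ^ m - 1)` vanished, `B_m` would have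
dimension at most `p ^ m - 1`; but the monomials `x^a` with all exponents `a i < p` are linearly
independent in `B_m`, since no nonzero combination of them lies in `(x_1^p, …, x_m^p)`. -/

set_option synthInstance.maxHeartbeats 1000000
set_option maxHeartbeats 1000000

/-- The truncated polynomial ring `B_m = F[x_1,…,x_m]/(x_1^p,…,x_m^p)`. -/
abbrev TruncPoly (F : Type*) [Field F] (p m : ℕ) : Type _ :=
  MvPolynomial (Fin m) F ⧸
    Ideal.span (Set.range fun i : Fin m => (MvPolynomial.X i : MvPolynomial (Fin m) F) ^ p)

namespace LinearMap

variable {K V : Type*} [DivisionRing K] [AddCommGroup V] [Module K V]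

theorem rank_ker_pow_le (f : V →ₗ[K] V) (k : ℕ) :
    Module.rank K (ker (f ^ k)) ≤ k * Module.rank K (ker f) := by
  induction k with
  | zero => simp [Module.End.one_eq_id]
  | succ k ih =>
    have hcomap : ker (f ^ (k + 1)) = (ker (f ^ k)).comap f := by
      rw [pow_succ, Module.End.mul_eq_comp, ker_comp]
    calc Module.rank K (ker (f ^ (k + 1)))
        ≤ Module.rank K (ker (f ^ k)) + Module.rank K (ker f) := by
          rw [hcomap]
          simpa only [Cardinal.lift_id] using f.lift_rank_comap_le (ker (f ^ k))
      _ ≤ k * Module.rank K (ker f) + Module.rank K (ker f) := by gcongr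
      _ = (k + 1 : ℕ) * Module.rank K (ker f) := by push_cast; ring

theorem rank_le_of_pow_eq_zero {f : V →ₗ[K] V} {k : ℕ} (hk : f ^ k = 0) :
    Module.rank K V ≤ k * Module.rank K (ker f) := by
  have h := f.rank_ker_pow_le k
  rwa [hk, ker_zero, rank_top] at h

end LinearMap

namespace MvPolynomial

variable {σ R : Type*} [CommRing R] {n : ℕ}

theorem exists_le_of_mem_span_X_pow {x : MvPolynomial σ R}
    (hx : x ∈ Ideal.span (Set.range fun i : σ => (X i : MvPolynomial σ R) ^ n))
    {s : σ →₀ ℕ} (hs : s ∈ x.support) : ∃ i, n ≤ s i := by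
  have hrange : (Set.range fun i : σ => (X i : MvPolynomial σ R) ^ n)
      = (monomial · (1 : R)) '' Set.range fun i => Finsupp.single i n := by
    rw [← Set.range_comp]
    congr 1
    funext i
    exact X_pow_eq_monomial
  rw [hrange] at hx
  obtain ⟨_, ⟨i, rfl⟩, hle⟩ := mem_ideal_span_monomial_image.mp hx s hs
  exact ⟨i, by simpa using hle i⟩

theorem disjoint_restrictDegree_ker_mkₐ_span_X_pow (hn : 0 < n) :
    Disjoint (restrictDegree σ R (n - 1)) (LinearMap.ker (Ideal.Quotient.mkₐ R
      (Ideal.span (Set.range fun i : σ => (X i : MvPolynomial σ R) ^ n))).toLinearMap) := by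
  rw [Submodule.disjoint_def]
  intro x hdeg hker
  have hI := Ideal.Quotient.eq_zero_iff_mem.mp hker
  refine support_eq_empty.mp (Finset.eq_empty_of_forall_notMem fun s hs => ?_)
  obtain ⟨i, hi⟩ := exists_le_of_mem_span_X_pow hI hs
  have := (mem_restrictDegree _ _ _).mp hdeg s hs i
  omega

end MvPolynomial

open MvPolynomial in
theorem TruncPoly.pow_le_rank {F : Type*} [Field F] {p : ℕ} (hp : 0 < p) (m : ℕ) :
    ((p ^ m : ℕ) : Cardinal) ≤ Module.rank F (TruncPoly F p m) := by
  let exponent : (Fin m → Fin p) → (Fin m →₀ ℕ) :=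
    fun a => Finsupp.equivFunOnFinite.symm fun i => a i
  have hexponent : Function.Injective exponent :=
    Finsupp.equivFunOnFinite.symm.injective.comp fun _ _ h => funext fun i => Fin.ext (congrFun h i)
  have hli : LinearIndependent F fun a =>
      (Ideal.Quotient.mk _ (monomial (exponent a) (1 : F)) : TruncPoly F p m) := by
    refine ((basisMonomials (Fin m) F).linearIndependent.comp exponent hexponent).map
      (f := (Ideal.Quotient.mkₐ F _).toLinearMap) ?_
    refine Disjoint.mono_left ?_ (disjoint_restrictDegree_ker_mkₐ_span_X_pow hp)
    rw [Submodule.span_le, Set.range_subset_iff]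
    intro a
    rw [coe_basisMonomials, Function.comp_apply, restrictDegree, SetLike.mem_coe,
      monomial_mem_restrictSupport]
    exact Or.inl fun i => Nat.le_sub_one_of_lt (a i).isLt
  have h := hli.cardinal_lift_le_rank
  rwa [Cardinal.mk_fintype, Fintype.card_fun, Fintype.card_fin, Fintype.card_fin,
    Cardinal.lift_natCast, Cardinal.lift_id'] at h

theorem stmt_3_general {F : Type*} [Field F] {p m : ℕ} (hp : p.Prime)
    (D : Derivation F (TruncPoly F p m) (TruncPoly F p m))
    (hker : ∀ f : TruncPoly F p m,
      D f = 0 ↔ ∃ c : F, f = algebraMap F (TruncPoly F p m) c) :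
    D.toLinearMap ^ (p ^ m - 1) ≠ 0 := by
  intro hzero
  have hker_le : LinearMap.ker D.toLinearMap ≤ Submodule.span F {1} := fun f hf => by
    obtain ⟨c, rfl⟩ := (hker f).mp hf
    rw [Algebra.algebraMap_eq_smul_one]
    exact Submodule.smul_mem _ _ (Submodule.mem_span_singleton_self _)
  have hrank_ker : Module.rank F (LinearMap.ker D.toLinearMap) ≤ 1 :=
    (Submodule.rank_mono hker_le).trans ((rank_span_le _).trans_eq (Cardinal.mk_singleton _))
  have hrank : ((p ^ m : ℕ) : Cardinal) ≤ ((p ^ m - 1 : ℕ) : Cardinal) :=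
    calc ((p ^ m : ℕ) : Cardinal)
        ≤ Module.rank F (TruncPoly F p m) := TruncPoly.pow_le_rank hp.pos m
      _ ≤ (p ^ m - 1 : ℕ) * Module.rank F (LinearMap.ker D.toLinearMap) :=
        LinearMap.rank_le_of_pow_eq_zero hzero
      _ ≤ (p ^ m - 1 : ℕ) := by simpa using mul_le_mul_right hrank_ker _
  have hpos : 0 < p ^ m := pow_pos hp.pos m
  have := Nat.cast_le.mp hrank
  omega

/-- A nilpotent derivation of `B_m` whose ring of constants is exactly `F·1`
is regular nilpotent: `D^{p^m - 1} ≠ 0`. -/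
theorem stmt_3 {F : Type*} [Field F] {p m : ℕ} (hp : p.Prime) [CharP F p]
    (D : Derivation F (TruncPoly F p m) (TruncPoly F p m))
    (hnil : IsNilpotent D.toLinearMap)
    (hker : ∀ f : TruncPoly F p m,
      D f = 0 ↔ ∃ c : F, f = algebraMap F (TruncPoly F p m) c) :
    D.toLinearMap ^ (p ^ m - 1) ≠ 0 :=
  stmt_3_general hp D hker
end
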